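/- arXiv:0803.3787 — 5 statements merged into one kernel-verified Lean document; each statement's English description precedes it below -/
import Mathlib

section
/- For every real x ≥ 1, the absolute value of the partial sum ∑_{k=1}^{⌊x⌋} μ(k)/k is at most 1, where μ is the Möbius function. -/
/-!
Let `n = ⌊x⌋` and `S = ∑_{k ≤ n} μ(k) / k`. Summing `∑_{d ∣ m} μ(d) = [m = 1]` over `m ≤ n`
gives `∑_{k ≤ n} μ(k) ⌊n / k⌋ = 1`, hence `n S - 1 = ∑_{k ≤ n} μ(k) {n / k}`. The term `k = 1`
vanishes and the other `n - 1` terms have absolute value below `1`, so `|n S - 1| ≤ n - 1`,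
that is `|n S| ≤ n`.
-/

open Finset ArithmeticFunction
open scoped ArithmeticFunction.Moebius

theorem ArithmeticFunction.sum_Ioc_moebius_mul_div {R : Type*} [Ring R] {N : ℕ} (hN : 1 ≤ N) :
    ∑ n ∈ Ioc 0 N, (μ n : R) * (N / n : ℕ) = 1 := by
  have h := sum_Ioc_mul_zeta_eq_sum (μ : ArithmeticFunction R) N
  rw [coe_moebius_mul_coe_zeta] at h
  simp only [intCoe_apply] at h
  rw [← h, sum_eq_single_of_mem 1 (by simp [hN]) fun n _ hn ↦ one_apply_ne hn, one_one]

section FloorRing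

variable {K : Type*} [Field K] [LinearOrder K] [IsStrictOrderedRing K] [FloorRing K]

theorem Int.fract_natCast_div_natCast (n k : ℕ) :
    Int.fract ((n : K) / k) = n / k - (n / k : ℕ) := by
  rw [Int.fract, ← Int.natCast_floor_eq_floor (by positivity), Nat.floor_div_eq_div,
    Int.cast_natCast]

theorem sum_Ioc_fract_div_le {n : ℕ} (hn : 1 ≤ n) :
    ∑ k ∈ Ioc 0 n, Int.fract ((n : K) / k) ≤ n - 1 := by
  have hone_mem : 1 ∈ Ioc 0 n := by simp [hn]
  have hfract_one : Int.fract ((n : K) / (1 : ℕ)) = 0 := by simp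
  rw [← sum_erase (f := fun k : ℕ ↦ Int.fract ((n : K) / k)) _ hfract_one]
  calc ∑ k ∈ (Ioc 0 n).erase 1, Int.fract ((n : K) / k)
      ≤ ∑ _k ∈ (Ioc 0 n).erase 1, (1 : K) := by
        gcongr
        exact (Int.fract_lt_one _).le
    _ = n - 1 := by simp [card_erase_of_mem hone_mem, Nat.cast_sub hn]

theorem abs_sum_mul_fract_div_le {a : ℕ → K} (ha : ∀ k, |a k| ≤ 1) {n : ℕ} (hn : 1 ≤ n) :
    |∑ k ∈ Ioc 0 n, a k * Int.fract ((n : K) / k)| ≤ n - 1 := by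
  refine (abs_sum_le_sum_abs _ _).trans <| le_trans ?_ (sum_Ioc_fract_div_le hn)
  gcongr with k
  rw [abs_mul, abs_of_nonneg (Int.fract_nonneg ((n : K) / k))]
  exact mul_le_of_le_one_left (Int.fract_nonneg _) (ha k)

end FloorRing

theorem abs_sum_moebius_div_le_one (x : ℝ) (hx : 1 ≤ x) :
    |∑ k ∈ Finset.Icc 1 ⌊x⌋₊, (ArithmeticFunction.moebius k : ℝ) / k| ≤ 1 := by
  rw [show Icc 1 ⌊x⌋₊ = Ioc 0 ⌊x⌋₊ from Icc_add_one_left_eq_Ioc 0 _]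
  set n := ⌊x⌋₊
  have hn : 1 ≤ n := Nat.le_floor (by exact_mod_cast hx)
  have hnpos : (0 : ℝ) < n := by exact_mod_cast hn
  set S := ∑ k ∈ Ioc 0 n, (μ k : ℝ) / k
  have hS : n * S - 1 = ∑ k ∈ Ioc 0 n, (μ k : ℝ) * Int.fract ((n : ℝ) / k) := by
    rw [← sum_Ioc_moebius_mul_div (R := ℝ) hn, mul_sum, ← sum_sub_distrib]
    refine sum_congr rfl fun k _ ↦ ?_
    rw [Int.fract_natCast_div_natCast]
    ring
  have hμ : ∀ k, |(μ k : ℝ)| ≤ 1 := fun k ↦ by exact_mod_cast abs_moebius_le_one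
  have hbound : |n * S - 1| ≤ n - 1 := hS ▸ abs_sum_mul_fract_div_le hμ hn
  have hnS : (n : ℝ) * |S| ≤ n * 1 := by
    rw [← abs_of_pos hnpos, ← abs_mul, abs_of_pos hnpos]
    linarith [abs_sub_abs_le_abs_sub (n * S) 1, abs_one (α := ℝ)]
  exact le_of_mul_le_mul_left hnS hnpos
end

section
/- If lim_{x→∞} (1/log x) · ∑_{k=1}^{⌊x⌋} μ(k)·log(k)/k = 0, then lim_{x→∞} ∑_{k=1}^{⌊x⌋} μ(k)/k = 0. -/
/-!
Write `g x = ∑_{k ≤ x} μ k / k`. The difference `log x * g x - ∑_{k ≤ x} μ k * log k / k` equals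
`∑_{k ≤ x} μ k / k * log (x / k)`. Replacing `log (x / k)` by `harmonic ⌊x / k⌋ - γ` costs at most
`2 k / x` per term, and `∑_{k ≤ N} μ k / k * harmonic ⌊N / k⌋ = ∑_{n ≤ N} (1 / n) ∑_{d ∣ n} μ d = 1`.
Together with `|g x| ≤ 1` this bounds the difference by `3 + γ`, so divided by `log x` it tends
to `0`, and `g x` has the same limit as `(1 / log x) * ∑_{k ≤ x} μ k * log k / k`.
-/

open Filter Finset ArithmeticFunction
open scoped ArithmeticFunction.Moebius ArithmeticFunction.zeta

namespace ArithmeticFunction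

theorem pdiv_natCoe_id_mul {R : Type*} [Field R] (f g : ArithmeticFunction R) :
    f.pdiv ↑ArithmeticFunction.id * g.pdiv ↑ArithmeticFunction.id =
      (f * g).pdiv ↑ArithmeticFunction.id := by
  ext n
  simp only [mul_apply, pdiv_apply, natCoe_apply, id_apply, sum_div]
  refine sum_congr rfl fun p hp => ?_
  rw [← (Nat.mem_divisorsAntidiagonal.mp hp).1, Nat.cast_mul, div_mul_div_comm]

theorem sum_Ioc_one_apply {R : Type*} [AddCommMonoid R] [One R] {N : ℕ} (hN : 1 ≤ N) :
    ∑ n ∈ Ioc 0 N, (1 : ArithmeticFunction R) n = 1 := by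
  simp [one_apply, hN]

end ArithmeticFunction

theorem Nat.Icc_one_eq_Ioc_zero (N : ℕ) : Icc 1 N = Ioc 0 N := Finset.Icc_succ_left_eq_Ioc 0 N

theorem sum_moebius_mul_div_eq_one {N : ℕ} (hN : 1 ≤ N) :
    ∑ k ∈ Icc 1 N, (μ k : ℝ) * (N / k : ℕ) = 1 := by
  have h := sum_Ioc_mul_zeta_eq_sum (μ : ArithmeticFunction ℝ) N
  rw [coe_moebius_mul_coe_zeta, sum_Ioc_one_apply hN] at h
  simpa [Nat.Icc_one_eq_Ioc_zero] using h.symm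

theorem sum_moebius_div_mul_harmonic_eq_one {N : ℕ} (hN : 1 ≤ N) :
    ∑ k ∈ Icc 1 N, (μ k : ℝ) / k * (harmonic (N / k) : ℝ) = 1 := by
  have hζ (m : ℕ) : ((ζ : ArithmeticFunction ℝ).pdiv ↑ArithmeticFunction.id) m = (m : ℝ)⁻¹ := by
    rcases eq_or_ne m 0 with rfl | hm <;> simp [pdiv_apply, *]
  have h := sum_Ioc_mul_eq_sum_sum ((μ : ArithmeticFunction ℝ).pdiv ↑ArithmeticFunction.id)
    ((ζ : ArithmeticFunction ℝ).pdiv ↑ArithmeticFunction.id) N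
  rw [pdiv_natCoe_id_mul, coe_moebius_mul_coe_zeta] at h
  simpa [pdiv_apply, one_apply, ite_div, hζ, hN, harmonic_eq_sum_Icc, Nat.Icc_one_eq_Ioc_zero]
    using h.symm

theorem abs_sum_moebius_div_le_one_s6 (N : ℕ) : |∑ k ∈ Icc 1 N, (μ k : ℝ) / k| ≤ 1 := by
  rcases Nat.eq_zero_or_pos N with rfl | hN
  · simp
  have hterm (k : ℕ) : |(μ k : ℝ) * ((N : ℝ) / k - (N / k : ℕ))| ≤ 1 := by
    have hfloor : ⌊(N : ℝ) / k⌋₊ = N / k := by rw [Nat.floor_div_natCast, Nat.floor_natCast]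
    have hle := Nat.floor_le (by positivity : (0 : ℝ) ≤ N / k)
    have hlt := Nat.lt_floor_add_one ((N : ℝ) / k)
    rw [hfloor] at hle hlt
    rw [abs_mul]
    refine mul_le_one₀ (by exact_mod_cast abs_moebius_le_one) (abs_nonneg _) ?_
    rw [abs_le]
    constructor <;> linarith
  have hrem : N * ∑ k ∈ Icc 1 N, (μ k : ℝ) / k - 1 =
      ∑ k ∈ Ioc 1 N, (μ k : ℝ) * ((N : ℝ) / k - (N / k : ℕ)) := by
    rw [← sum_moebius_mul_div_eq_one hN, mul_sum, ← sum_sub_distrib, ← add_sum_Ioc_eq_sum_Icc hN]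
    simp only [Nat.cast_one, div_one, Nat.div_one, mul_comm, sub_self, zero_add]
    exact sum_congr rfl fun k _ => by ring
  have hdev : |N * ∑ k ∈ Icc 1 N, (μ k : ℝ) / k - 1| ≤ N - 1 := by
    rw [hrem]
    calc _ ≤ ∑ k ∈ Ioc 1 N, |(μ k : ℝ) * ((N : ℝ) / k - (N / k : ℕ))| := abs_sum_le_sum_abs _ _
      _ ≤ ∑ _k ∈ Ioc 1 N, (1 : ℝ) := sum_le_sum fun k _ => hterm k
      _ = N - 1 := by simp [Nat.cast_sub hN]
  have hN' : (0 : ℝ) < N := by exact_mod_cast hN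
  rw [← mul_le_mul_iff_right₀ hN', mul_one, ← abs_of_pos hN', ← abs_mul, abs_of_pos hN']
  rw [abs_le] at hdev ⊢
  constructor <;> linarith

noncomputable def harmonicError (y : ℝ) : ℝ :=
  harmonic ⌊y⌋₊ - Real.log y - Real.eulerMascheroniConstant

-- Both `harmonic ⌊y⌋₊ - γ` and `log y` lie in `[log n, log (n + 1)]` for `n = ⌊y⌋₊`.
theorem abs_harmonicError_le {y : ℝ} (hy : 1 ≤ y) : |harmonicError y| ≤ 2 / y := by
  set n := ⌊y⌋₊
  have hn : 1 ≤ n := Nat.le_floor (by exact_mod_cast hy)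
  have hn' : (1 : ℝ) ≤ n := by exact_mod_cast hn
  have hny : (n : ℝ) ≤ y := Nat.floor_le (by linarith)
  have hyn : y < n + 1 := Nat.lt_floor_add_one y
  have hupper := Real.eulerMascheroniConstant_lt_eulerMascheroniSeq' n
  have hlower := Real.eulerMascheroniSeq_lt_eulerMascheroniConstant n
  rw [Real.eulerMascheroniSeq', if_neg (by omega)] at hupper
  rw [Real.eulerMascheroniSeq] at hlower
  have hlog_n : Real.log n ≤ Real.log y := Real.log_le_log (by positivity) hny
  have hlog_succ : Real.log y ≤ Real.log (n + 1) := Real.log_le_log (by positivity) hyn.le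
  have hgap : Real.log (n + 1) - Real.log n ≤ 2 / y := by
    rw [← Real.log_div (by positivity) (by positivity)]
    calc Real.log ((n + 1) / n) ≤ (n + 1) / n - 1 := Real.log_le_sub_one_of_pos (by positivity)
      _ = 1 / n := by field_simp; ring
      _ ≤ 2 / y := by rw [div_le_div_iff₀ (by positivity) (by positivity)]; linarith
  rw [harmonicError, abs_le]
  constructor <;> linarith

theorem log_mul_sum_moebius_div_sub_eq {x : ℝ} (hx : 1 ≤ x) :
    Real.log x * ∑ k ∈ Icc 1 ⌊x⌋₊, (μ k : ℝ) / k - ∑ k ∈ Icc 1 ⌊x⌋₊, (μ k : ℝ) * Real.log k / k =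
      1 - Real.eulerMascheroniConstant * ∑ k ∈ Icc 1 ⌊x⌋₊, (μ k : ℝ) / k
        - ∑ k ∈ Icc 1 ⌊x⌋₊, (μ k : ℝ) / k * harmonicError (x / k) := by
  rw [← sum_moebius_div_mul_harmonic_eq_one (Nat.le_floor (by exact_mod_cast hx))]
  simp only [mul_sum, ← sum_sub_distrib]
  refine sum_congr rfl fun k hk => ?_
  have hk : (0 : ℝ) < k := by exact_mod_cast (mem_Icc.mp hk).1
  rw [harmonicError, Nat.floor_div_natCast, Real.log_div (by positivity) hk.ne']
  ring

theorem abs_sum_moebius_div_mul_harmonicError_le {x : ℝ} (hx : 1 ≤ x) :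
    |∑ k ∈ Icc 1 ⌊x⌋₊, (μ k : ℝ) / k * harmonicError (x / k)| ≤ 2 := by
  have hx0 : 0 < x := by linarith
  calc _ ≤ ∑ k ∈ Icc 1 ⌊x⌋₊, |(μ k : ℝ) / k * harmonicError (x / k)| := abs_sum_le_sum_abs _ _
    _ ≤ ∑ _k ∈ Icc 1 ⌊x⌋₊, 2 / x := sum_le_sum fun k hk => ?_
    _ = 2 * ⌊x⌋₊ / x := by
      simp only [sum_const, Nat.card_Icc, add_tsub_cancel_right, nsmul_eq_mul]; ring
    _ ≤ 2 := by rw [div_le_iff₀ hx0]; linarith [Nat.floor_le hx0.le]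
  obtain ⟨hk1, hkx⟩ := mem_Icc.mp hk
  have hk : (0 : ℝ) < k := by exact_mod_cast hk1
  have hxk : 1 ≤ x / k := by
    rw [le_div_iff₀ hk, one_mul]; exact (Nat.cast_le.mpr hkx).trans (Nat.floor_le hx0.le)
  calc |(μ k : ℝ) / k * harmonicError (x / k)| ≤ 1 / k * (2 / (x / k)) := by
        rw [abs_mul, abs_div, Nat.abs_cast]
        gcongr
        · exact_mod_cast abs_moebius_le_one
        · exact abs_harmonicError_le hxk
    _ = 2 / x := by field_simp

theorem abs_log_mul_sum_moebius_div_sub_le {x : ℝ} (hx : 1 ≤ x) :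
    |Real.log x * ∑ k ∈ Icc 1 ⌊x⌋₊, (μ k : ℝ) / k - ∑ k ∈ Icc 1 ⌊x⌋₊, (μ k : ℝ) * Real.log k / k|
      ≤ 3 + Real.eulerMascheroniConstant := by
  have hγ : 0 ≤ Real.eulerMascheroniConstant := by
    linarith [Real.one_half_lt_eulerMascheroniConstant]
  have hg := abs_le.mp (abs_sum_moebius_div_le_one_s6 ⌊x⌋₊)
  have herr := abs_le.mp (abs_sum_moebius_div_mul_harmonicError_le hx)
  rw [log_mul_sum_moebius_div_sub_eq hx, abs_le]
  constructor <;> nlinarith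

theorem moebius_sum_tendsto_zero_of_log_weighted
    (h : Tendsto (fun x : ℝ =>
        (1 / Real.log x) *
          ∑ k ∈ Finset.Icc 1 ⌊x⌋₊, (ArithmeticFunction.moebius k : ℝ) * Real.log k / k)
        atTop (nhds 0)) :
    Tendsto (fun x : ℝ => ∑ k ∈ Finset.Icc 1 ⌊x⌋₊, (ArithmeticFunction.moebius k : ℝ) / k)
      atTop (nhds 0) := by
  have hdiff : Tendsto (fun x : ℝ => (Real.log x * ∑ k ∈ Icc 1 ⌊x⌋₊, (μ k : ℝ) / k
      - ∑ k ∈ Icc 1 ⌊x⌋₊, (μ k : ℝ) * Real.log k / k) / Real.log x) atTop (nhds 0) := by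
    refine squeeze_zero_norm' ?_ ((tendsto_const_nhds (x := 3 + Real.eulerMascheroniConstant)).div_atTop
      Real.tendsto_log_atTop)
    filter_upwards [eventually_ge_atTop 1] with x hx
    rw [norm_div, Real.norm_eq_abs, Real.norm_of_nonneg (Real.log_nonneg hx)]
    exact div_le_div_of_nonneg_right (abs_log_mul_sum_moebius_div_sub_le hx) (Real.log_nonneg hx)
  refine (add_zero (0 : ℝ) ▸ h.add hdiff).congr' ?_
  filter_upwards [eventually_gt_atTop 1] with x hx
  have hlog : Real.log x ≠ 0 := (Real.log_pos hx).ne'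
  field_simp
  ring
end

section
/- For every real x ≥ 1, ∑_{k=1}^{⌊x⌋} μ(k)·log(k)/k = −∑_{p ≤ x} log p · ∑_{i ≥ 1} (1/pⁱ) · g(x/pⁱ), where the outer sum ranges over primes p ≤ x and g(y) = ∑_{k ≤ y} μ(k)/k (g(y)=0 for y<1). -/
noncomputable def g (y : ℝ) : ℝ :=
  ∑ k ∈ Finset.Icc 1 ⌊y⌋₊, (ArithmeticFunction.moebius k : ℝ) / k

/-!
Dividing the convolution identity `Λ * μ = -μ·log` by `n`, which is legitimate because
`n ↦ n` is completely multiplicative, and summing over `n ≤ x` gives, after the hyperbola swap,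
`∑_{k ≤ x} μ(k) log k / k = -∑_{b ≤ x} Λ(b) / b · g(x / b)`.
Since `Λ` lives on prime powers `p^(i+1)`, where it equals `log p`, the right-hand side
regroups as the double sum over primes and exponents.
-/

open Finset ArithmeticFunction
open scoped ArithmeticFunction.Moebius ArithmeticFunction.zeta

theorem tsum_pow_succ_eq_sum_range {M : Type*} [AddCommMonoid M] [TopologicalSpace M]
    {p N : ℕ} (hp : 1 < p) (F : ℕ → M) (hF : ∀ n, N < n → F n = 0) :
    ∑' i, F (p ^ (i + 1)) = ∑ i ∈ range N, F (p ^ (i + 1)) :=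
  tsum_eq_sum fun i hi => hF _ <| by
    have := Nat.lt_pow_self (n := i + 1) hp
    rw [mem_range] at hi
    omega

namespace ArithmeticFunction

theorem mul_pdiv_of_map_mul {R : Type*} [Semifield R] (f h c : ArithmeticFunction R)
    (hc : ∀ a b, c (a * b) = c a * c b) : (f * h).pdiv c = f.pdiv c * h.pdiv c := by
  ext n
  simp only [pdiv_apply, mul_apply, sum_div]
  refine sum_congr rfl fun ab hab => ?_
  rw [← (Nat.mem_divisorsAntidiagonal.mp hab).1, hc]
  ring

theorem vonMangoldt_mul_moebius : Λ * μ = -(μ : ArithmeticFunction ℝ).pmul log := by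
  have h : (μ : ArithmeticFunction ℝ).pmul log * ζ = -Λ := by
    ext n
    rw [coe_mul_zeta_apply]
    simpa [pmul_apply, log_apply] using sum_moebius_mul_log_eq
  rw [← neg_eq_iff_eq_neg, ← neg_mul, ← h, mul_assoc, coe_zeta_mul_coe_moebius, mul_one]

theorem sum_Icc_moebius_mul_log_div_eq (N : ℕ) :
    ∑ k ∈ Icc 1 N, (μ k : ℝ) * Real.log k / k =
      -∑ b ∈ Icc 1 N, Λ b / b * ∑ a ∈ Icc 1 (N / b), (μ a : ℝ) / a := by
  have h := congrArg (fun F => ∑ n ∈ Ioc 0 N, (F.pdiv ↑ArithmeticFunction.id) n)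
    vonMangoldt_mul_moebius
  rw [mul_pdiv_of_map_mul _ _ _ (fun a b => by simp), sum_Ioc_mul_eq_sum_sum] at h
  have hIcc (M : ℕ) : Icc 1 M = Ioc 0 M := Icc_succ_left_eq_Ioc 0 M
  simp only [pdiv_apply, neg_apply, pmul_apply, intCoe_apply, natCoe_apply, id_apply, log_apply,
    neg_div, sum_neg_distrib] at h
  simp only [hIcc, h, neg_neg]

theorem vonMangoldt_pow_succ {p : ℕ} (hp : p.Prime) (k : ℕ) :
    Λ (p ^ (k + 1)) = Real.log p := by
  rw [vonMangoldt_apply_pow k.succ_ne_zero, vonMangoldt_apply_prime hp]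

theorem sum_Icc_vonMangoldt_mul_eq_sum_primes (N : ℕ) (F : ℕ → ℝ)
    (hF : ∀ n, N < n → F n = 0) :
    ∑ n ∈ Icc 1 N, Λ n * F n =
      ∑ p ∈ filter Nat.Prime (Icc 1 N), Real.log p * ∑' i, F (p ^ (i + 1)) := by
  have htsum (p) (hp : p ∈ filter Nat.Prime (Icc 1 N)) :
      Real.log p * ∑' i, F (p ^ (i + 1)) = ∑ i ∈ range N, Real.log p * F (p ^ (i + 1)) := by
    rw [tsum_pow_succ_eq_sum_range (mem_filter.mp hp).2.one_lt F hF, mul_sum]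
  rw [sum_congr rfl htsum, ← sum_product']
  symm
  refine sum_bij_ne_zero (fun x _ _ => x.1 ^ (x.2 + 1)) ?_ ?_ ?_ ?_
  · rintro ⟨p, i⟩ hpi hne
    simp only [mem_product, mem_filter] at hpi
    have hle : p ^ (i + 1) ≤ N := by
      by_contra hlt
      exact hne (by rw [hF _ (not_le.mp hlt), mul_zero])
    exact mem_Icc.mpr ⟨Nat.one_le_iff_ne_zero.mpr (pow_ne_zero _ hpi.1.2.ne_zero), hle⟩
  · rintro ⟨p, i⟩ hpi _ ⟨q, j⟩ hqj _ h
    simp only [mem_product, mem_filter] at hpi hqj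
    obtain ⟨rfl, rfl⟩ := Nat.Prime.pow_inj hpi.1.2 hqj.1.2 h
    rfl
  · intro n hn hne
    obtain ⟨p, k, hp, hk, rfl⟩ := (isPrimePow_nat_iff n).mp
      (vonMangoldt_ne_zero_iff.mp (left_ne_zero_of_mul hne))
    obtain ⟨j, rfl⟩ := Nat.exists_eq_add_one_of_ne_zero hk.ne'
    rw [vonMangoldt_pow_succ hp] at hne
    have hpN := (mem_Icc.mp hn).2
    have hp_le : p ≤ p ^ (j + 1) := Nat.le_self_pow j.succ_ne_zero p
    have hj_lt : j + 1 < p ^ (j + 1) := Nat.lt_pow_self hp.one_lt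
    refine ⟨(p, j), ?_, hne, rfl⟩
    simp only [mem_product, mem_filter, mem_Icc, mem_range]
    exact ⟨⟨⟨hp.one_le, hp_le.trans hpN⟩, hp⟩, by omega⟩
  · rintro ⟨p, i⟩ hpi _
    simp only [mem_product, mem_filter] at hpi
    rw [vonMangoldt_pow_succ hpi.1.2]

end ArithmeticFunction

theorem g_div_natCast (x : ℝ) (b : ℕ) :
    g (x / b) = ∑ a ∈ Icc 1 (⌊x⌋₊ / b), (μ a : ℝ) / a := by
  rw [g, Nat.floor_div_natCast]

theorem moebius_log_sum_eq_general (x : ℝ) :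
    ∑ k ∈ Finset.Icc 1 ⌊x⌋₊, (ArithmeticFunction.moebius k : ℝ) * Real.log k / k =
      -∑ p ∈ Finset.filter Nat.Prime (Finset.Icc 1 ⌊x⌋₊),
        Real.log p * ∑' i : ℕ, (1 / (p : ℝ) ^ (i + 1)) * g (x / (p : ℝ) ^ (i + 1)) := by
  have hF (n : ℕ) (hn : ⌊x⌋₊ < n) : 1 / (n : ℝ) * g (x / n) = 0 := by
    rw [g_div_natCast, Nat.div_eq_of_lt hn, Icc_eq_empty_of_lt zero_lt_one, sum_empty, mul_zero]
  calc _ = -∑ b ∈ Icc 1 ⌊x⌋₊, Λ b * (1 / (b : ℝ) * g (x / b)) := by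
        rw [sum_Icc_moebius_mul_log_div_eq]
        congr 1
        refine sum_congr rfl fun b _ => ?_
        rw [g_div_natCast]
        ring
    _ = _ := by
        rw [sum_Icc_vonMangoldt_mul_eq_sum_primes _ _ hF]
        push_cast
        rfl

theorem moebius_log_sum_eq (x : ℝ) (hx : 1 ≤ x) :
    ∑ k ∈ Finset.Icc 1 ⌊x⌋₊, (ArithmeticFunction.moebius k : ℝ) * Real.log k / k =
      -∑ p ∈ Finset.filter Nat.Prime (Finset.Icc 1 ⌊x⌋₊),
        Real.log p * ∑' i : ℕ, (1 / (p : ℝ) ^ (i + 1)) * g (x / (p : ℝ) ^ (i + 1)) :=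
  moebius_log_sum_eq_general x
end

section
/- For all x > 0, the Chebyshev function θ(x) = ∑_{p ≤ x} log p satisfies θ(x) < 2x. -/
open Real Chebyshev

theorem log_four_lt_two : log 4 < 2 := by
  have h : log 4 = 2 * log 2 := by
    rw [show (4 : ℝ) = 2 ^ 2 by norm_num, log_pow, Nat.cast_ofNat]
  linarith [log_two_lt_d9]

theorem chebyshev_lt_two_mul (x : ℝ) (hx : 0 < x) :
    ∑ p ∈ Finset.filter Nat.Prime (Finset.Icc 1 ⌊x⌋₊), Real.log p < 2 * x := by
  calc ∑ p ∈ Finset.filter Nat.Prime (Finset.Icc 1 ⌊x⌋₊), log p = θ x := by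
        rw [theta, ← Finset.Icc_add_one_left_eq_Ioc, zero_add]
    _ ≤ log 4 * x := theta_le_log4_mul_x hx.le
    _ < 2 * x := mul_lt_mul_of_pos_right log_four_lt_two hx
end

section
/- Assume θ(x)/x → 1 as x → ∞ (where θ(x) = ∑_{p ≤ x} log p). Then (1/log x) · ∑_{k=1}^{⌊x⌋} μ(k)·log(k)/k → 0 as x → ∞. -/
open Filter

noncomputable def theta (x : ℝ) : ℝ :=
  ∑ p ∈ Finset.filter Nat.Prime (Finset.Icc 1 ⌊x⌋₊), Real.log p

/-!
Write `m N = ∑_{n ≤ N} μ(n)/n` and `M N = ∑_{n ≤ N} μ(n)`. Abel summation gives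
`∑_{n ≤ N} μ(n) log n / n = m N · log N - ∑_{n < N} m n · log ((n+1)/n)`, and the weights
`log ((n+1)/n)` add up to `log N`; so it suffices that `m N → 0`, which is Landau's consequence of
the prime number theorem. From `θ(x) ~ x` and `ψ - θ = O(√x)` we get `ψ(x) = x + o(x)`, and the
identity `μ · log = -μ ∗ Λ` turns this into `M N = o(N)`. Finally, splitting the pairs
`a · b ≤ qK` in `∑_{a · b ≤ qK} μ(a) = 1` according to `a ≤ q` or `b < K` gives
`|qK · m q| ≤ 1 + q + ∑_{b < K} (|M q| + |M (qK/b)|)`, so `limsup |m q| ≤ 1/K` for every `K`.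
-/

open Finset Asymptotics Topology
open ArithmeticFunction hiding log id
open scoped Chebyshev ArithmeticFunction.Moebius ArithmeticFunction.zeta

theorem tendsto_zero_of_forall_abs_le_add {α : Type*} {l : Filter α} {u : α → ℝ}
    (h : ∀ ε > 0, ∃ v : α → ℝ, Tendsto v l (𝓝 0) ∧ ∀ᶠ x in l, |u x| ≤ ε + v x) :
    Tendsto u l (𝓝 0) := by
  rw [Metric.tendsto_nhds]
  intro δ hδ
  obtain ⟨v, hv, hu⟩ := h (δ / 2) (half_pos hδ)
  filter_upwards [hu, hv.eventually (gt_mem_nhds (half_pos hδ))] with x hux hvx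
  rw [Real.dist_eq, sub_zero]
  linarith

theorem sum_Ioc_inv_le_one_add_log (N : ℕ) : ∑ n ∈ Ioc 0 N, (n : ℝ)⁻¹ ≤ 1 + Real.log N := by
  have h := harmonic_le_one_add_log N
  rw [harmonic_eq_sum_Icc] at h
  push_cast at h
  exact h

theorem sum_log_div_le (N : ℕ) : ∑ n ∈ Ioc 0 N, Real.log (N / n) ≤ N := by
  rcases N.eq_zero_or_pos with rfl | hN
  · simp
  have hfact : ∑ n ∈ Ioc 0 N, Real.log n = Real.log N.factorial := by
    rw [← Finset.prod_Ico_id_eq_factorial N, Nat.cast_prod, Real.log_prod]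
    · rfl
    · intro n hn
      have : 0 < n := (mem_Ico.1 hn).1
      positivity
  have hstirling := Stirling.le_log_factorial_stirling hN.ne'
  have hlogN : 0 ≤ Real.log N := Real.log_natCast_nonneg N
  have hlog2π : 0 ≤ Real.log (2 * Real.pi) := Real.log_nonneg (by linarith [Real.pi_gt_three])
  calc ∑ n ∈ Ioc 0 N, Real.log (N / n)
      = ∑ n ∈ Ioc 0 N, (Real.log N - Real.log n) :=
        sum_congr rfl fun n hn => Real.log_div (by positivity)
          (Nat.cast_ne_zero.2 (mem_Ioc.1 hn).1.ne')
    _ = N * Real.log N - Real.log N.factorial := by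
        rw [sum_sub_distrib, hfact, sum_const, Nat.card_Ioc, nsmul_eq_mul, Nat.sub_zero]
    _ ≤ N := by linarith

theorem theta_eq_chebyshev_theta (x : ℝ) : theta x = θ x := rfl

theorem isLittleO_sqrt_id : Real.sqrt =o[atTop] id := by
  refine (isLittleO_iff_tendsto' ?_).2 ?_
  · filter_upwards [eventually_gt_atTop 0] with x hx h
    exact absurd h hx.ne'
  · simp only [id, Real.sqrt_div_self', one_div]
    exact tendsto_inv_atTop_zero.comp Real.tendsto_sqrt_atTop

theorem isLittleO_psi_sub_self (hθ : Tendsto (fun x => theta x / x) atTop (𝓝 1)) :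
    (fun x => ψ x - x) =o[atTop] id := by
  have hθ' : (fun x => θ x - x) =o[atTop] id := by
    refine (isLittleO_iff_tendsto' ?_).2 ?_
    · filter_upwards [eventually_gt_atTop 0] with x hx h
      exact absurd h hx.ne'
    · have h := hθ.sub_const 1
      rw [sub_self] at h
      refine h.congr' ?_
      filter_upwards [eventually_gt_atTop 0] with x hx
      rw [id, sub_div, div_self hx.ne', theta_eq_chebyshev_theta]
  refine ((Chebyshev.isBigO_psi_sub_theta_sqrt.trans_isLittleO isLittleO_sqrt_id).add
    hθ').congr_left fun x => ?_
  simp only [Pi.sub_apply]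
  ring

theorem exists_abs_psi_sub_le (hψ : (fun x => ψ x - x) =o[atTop] id) {ε : ℝ} (hε : 0 < ε) :
    ∃ C, ∀ y ≥ 0, |ψ y - y| ≤ ε * y + C := by
  obtain ⟨Y, hY⟩ := eventually_atTop.1 (hψ.bound hε)
  set Y' := max Y 0
  have hC : 0 ≤ ψ Y' + Y' := add_nonneg (Chebyshev.psi_nonneg _) (le_max_right _ _)
  refine ⟨ψ Y' + Y', fun y hy => ?_⟩
  rcases le_total Y y with hYy | hyY
  · have h := hY y hYy
    rw [Real.norm_eq_abs, Real.norm_eq_abs, id, abs_of_nonneg hy] at h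
    linarith
  · have hψy : ψ y ≤ ψ Y' := Chebyshev.psi_mono (hyY.trans (le_max_left _ _))
    have hyY' : y ≤ Y' := hyY.trans (le_max_left _ _)
    have := Chebyshev.psi_nonneg y
    rw [abs_le]
    constructor <;> nlinarith

noncomputable def mertens (N : ℕ) : ℝ := ∑ n ∈ Ioc 0 N, (μ n : ℝ)

noncomputable def sumMoebiusDiv (N : ℕ) : ℝ := ∑ n ∈ Ioc 0 N, (μ n : ℝ) / n

noncomputable def sumMoebiusLogDiv (N : ℕ) : ℝ := ∑ n ∈ Ioc 0 N, (μ n : ℝ) * Real.log n / n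

theorem abs_moebius_cast_le_one (n : ℕ) : |(μ n : ℝ)| ≤ 1 := by
  exact_mod_cast abs_moebius_le_one

theorem pmul_moebius_log :
    (μ : ArithmeticFunction ℝ).pmul ArithmeticFunction.log = -((μ : ArithmeticFunction ℝ) * Λ) := by
  ext n
  rcases n.eq_zero_or_pos with rfl | hn
  · simp
  have h := (sum_eq_iff_sum_mul_moebius_eq (f := fun n => (μ n : ℝ) * Real.log n)
    (g := fun n => -Λ n)).1 (fun n _ => by simpa using sum_moebius_mul_log_eq) n hn
  simp only [pmul_apply, ArithmeticFunction.neg_apply, mul_apply, intCoe_apply, log_apply, ← h,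
    mul_neg, sum_neg_distrib]

theorem sum_moebius_mul_log_eq_neg_sum_psi (N : ℕ) :
    ∑ n ∈ Ioc 0 N, (μ n : ℝ) * Real.log n = -∑ a ∈ Ioc 0 N, (μ a : ℝ) * ψ (N / a) := by
  calc ∑ n ∈ Ioc 0 N, (μ n : ℝ) * Real.log n
      = ∑ n ∈ Ioc 0 N, -((μ : ArithmeticFunction ℝ) * Λ) n := by
        refine sum_congr rfl fun n _ => ?_
        rw [← ArithmeticFunction.neg_apply, ← pmul_moebius_log, pmul_apply, intCoe_apply, log_apply]
    _ = -∑ a ∈ Ioc 0 N, (μ a : ℝ) * ψ (N / a) := by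
        rw [sum_neg_distrib, sum_Ioc_mul_eq_sum_sum]
        simp only [intCoe_apply, Chebyshev.psi, Nat.floor_div_natCast, Nat.floor_natCast]

theorem sum_Ioc_sum_Ioc_div_comm {M : Type*} [AddCommMonoid M] (f : ℕ → ℕ → M) (q N : ℕ) :
    ∑ a ∈ Ioc 0 q, ∑ b ∈ Ioc 0 (N / a), f a b =
      ∑ b ∈ Ioc 0 N, ∑ a ∈ Ioc 0 (min q (N / b)), f a b := by
  refine sum_comm' fun a b => ?_
  simp only [mem_Ioc, le_min_iff]
  constructor
  · rintro ⟨⟨ha, haq⟩, hb, hba⟩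
    have hab : a * b ≤ N := by rw [mul_comm]; exact (Nat.le_div_iff_mul_le ha).1 hba
    exact ⟨⟨ha, haq, (Nat.le_div_iff_mul_le hb).2 hab⟩, hb,
      (Nat.le_mul_of_pos_left b ha).trans hab⟩
  · rintro ⟨⟨ha, haq, hab⟩, hb, -⟩
    have hab' : b * a ≤ N := by rw [mul_comm]; exact (Nat.le_div_iff_mul_le hb).1 hab
    exact ⟨⟨ha, haq⟩, hb, (Nat.le_div_iff_mul_le ha).2 hab'⟩

theorem sum_mertens_div {N : ℕ} (hN : 0 < N) : ∑ b ∈ Ioc 0 N, mertens (N / b) = 1 := by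
  calc ∑ b ∈ Ioc 0 N, mertens (N / b)
      = ∑ b ∈ Ioc 0 N, (ζ : ArithmeticFunction ℝ) b *
          ∑ a ∈ Ioc 0 (N / b), (μ : ArithmeticFunction ℝ) a := by
        refine sum_congr rfl fun b hb => ?_
        rw [natCoe_apply, zeta_apply, if_neg (mem_Ioc.1 hb).1.ne']
        simp [mertens, intCoe_apply]
    _ = ∑ n ∈ Ioc 0 N, (1 : ArithmeticFunction ℝ) n := by
        rw [← coe_zeta_mul_coe_moebius, sum_Ioc_mul_eq_sum_sum]
    _ = 1 := by simp [one_apply, hN.ne']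

theorem sum_moebius_mul_div_eq {q K : ℕ} (hq : 0 < q) (hK : 0 < K) :
    ∑ a ∈ Ioc 0 q, (μ a : ℝ) * (q * K / a : ℕ) =
      1 + ∑ b ∈ Ioo 0 K, (mertens q - mertens (q * K / b)) := by
  calc ∑ a ∈ Ioc 0 q, (μ a : ℝ) * (q * K / a : ℕ)
      = ∑ a ∈ Ioc 0 q, ∑ b ∈ Ioc 0 (q * K / a), (μ a : ℝ) := by simp [mul_comm]
    _ = ∑ b ∈ Ioc 0 (q * K), mertens (min q (q * K / b)) := sum_Ioc_sum_Ioc_div_comm _ q _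
    _ = ∑ b ∈ Ioc 0 (q * K), mertens (q * K / b) +
          ∑ b ∈ Ioc 0 (q * K), (mertens (min q (q * K / b)) - mertens (q * K / b)) := by
        rw [← sum_add_distrib]
        simp
    _ = 1 + ∑ b ∈ Ioo 0 K, (mertens q - mertens (q * K / b)) := by
        rw [sum_mertens_div (Nat.mul_pos hq hK)]
        congr 1
        refine (sum_subset_zero_on_sdiff (fun b hb => ?_) (fun b hb => ?_) (fun b hb => ?_)).symm
        · obtain ⟨hb0, hbK⟩ := mem_Ioo.1 hb
          exact mem_Ioc.2 ⟨hb0, hbK.le.trans (Nat.le_mul_of_pos_left K hq)⟩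
        · obtain ⟨hb, hbK⟩ := mem_sdiff.1 hb
          have hb0 := (mem_Ioc.1 hb).1
          have hKb : K ≤ b := not_lt.1 fun h => hbK (mem_Ioo.2 ⟨hb0, h⟩)
          rw [min_eq_right (Nat.div_le_of_le_mul (Nat.mul_le_mul_left q hKb |>.trans_eq
            (mul_comm q b))), sub_self]
        · obtain ⟨hb0, hbK⟩ := mem_Ioo.1 hb
          rw [min_eq_left ((Nat.le_div_iff_mul_le hb0).2 (Nat.mul_le_mul_left q hbK.le))]

theorem abs_sum_moebius_mul_div_sub_div_le (N Q : ℕ) :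
    |∑ a ∈ Ioc 0 Q, (μ a : ℝ) * ((N : ℝ) / a - (N / a : ℕ))| ≤ Q := by
  calc |∑ a ∈ Ioc 0 Q, (μ a : ℝ) * ((N : ℝ) / a - (N / a : ℕ))|
      ≤ ∑ a ∈ Ioc 0 Q, (1 : ℝ) := by
        refine (abs_sum_le_sum_abs _ _).trans (sum_le_sum fun a _ => ?_)
        have hlow : ((N / a : ℕ) : ℝ) ≤ N / a := Nat.cast_div_le
        have hupp := Nat.sub_one_lt_floor ((N : ℝ) / a)
        rw [Nat.floor_div_natCast, Nat.floor_natCast] at hupp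
        rw [abs_mul]
        exact mul_le_one₀ (abs_moebius_cast_le_one a) (abs_nonneg _)
          (abs_le.2 ⟨by linarith, by linarith⟩)
    _ = Q := by simp

theorem abs_mul_sumMoebiusDiv_le {q K : ℕ} (hq : 0 < q) (hK : 0 < K) :
    |((q * K : ℕ) : ℝ) * sumMoebiusDiv q| ≤
      1 + q + ∑ b ∈ Ioo 0 K, (|mertens q| + |mertens (q * K / b)|) := by
  have hsplit : ((q * K : ℕ) : ℝ) * sumMoebiusDiv q =
      ∑ a ∈ Ioc 0 q, (μ a : ℝ) * (q * K / a : ℕ) +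
        ∑ a ∈ Ioc 0 q, (μ a : ℝ) * (((q * K : ℕ) : ℝ) / a - (q * K / a : ℕ)) := by
    rw [sumMoebiusDiv, mul_sum, ← sum_add_distrib]
    exact sum_congr rfl fun a _ => by ring
  have hmain : |∑ b ∈ Ioo 0 K, (mertens q - mertens (q * K / b))| ≤
      ∑ b ∈ Ioo 0 K, (|mertens q| + |mertens (q * K / b)|) :=
    (abs_sum_le_sum_abs _ _).trans (sum_le_sum fun b _ => abs_sub _ _)
  have herr := abs_sum_moebius_mul_div_sub_div_le (q * K) q
  rw [hsplit, sum_moebius_mul_div_eq hq hK]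
  calc _ ≤ |(1 : ℝ)| + |∑ b ∈ Ioo 0 K, (mertens q - mertens (q * K / b))| +
        |∑ a ∈ Ioc 0 q, (μ a : ℝ) * (((q * K : ℕ) : ℝ) / a - (q * K / a : ℕ))| :=
        (abs_add_le _ _).trans (add_le_add_left (abs_add_le _ _) _)
    _ ≤ _ := by rw [abs_one]; linarith

theorem isLittleO_comp_of_le {u : ℕ → ℝ} (hu : u =o[atTop] (fun n => (n : ℝ))) {k g : ℕ → ℕ}
    (hk : Tendsto k atTop atTop) (hkg : ∀ n, k n ≤ g n) :
    (fun n => u (k n)) =o[atTop] (fun n => (g n : ℝ)) :=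
  (hu.comp_tendsto hk).trans_isBigO <| IsBigO.of_bound 1 <| Eventually.of_forall fun n => by
    simpa using hkg n

theorem tendsto_sumMoebiusDiv (hM : (fun N => mertens N) =o[atTop] (fun N => (N : ℝ))) :
    Tendsto sumMoebiusDiv atTop (𝓝 0) := by
  refine tendsto_zero_of_forall_abs_le_add fun ε hε => ?_
  obtain ⟨K, hK, hKε⟩ : ∃ K : ℕ, 0 < K ∧ 1 / (K : ℝ) < ε := by
    obtain ⟨k, hk⟩ := exists_nat_one_div_lt hε
    exact ⟨k + 1, k.succ_pos, by exact_mod_cast hk⟩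
  set S : ℕ → ℝ := fun q => 1 + ∑ b ∈ Ioo 0 K, (|mertens q| + |mertens (q * K / b)|)
  refine ⟨fun q => S q / (q * K : ℕ), ?_, ?_⟩
  · have hqK : Tendsto (fun q => q * K) atTop atTop :=
      tendsto_atTop_mono (fun q => Nat.le_mul_of_pos_right q hK) tendsto_id
    refine IsLittleO.tendsto_div_nhds_zero <| IsLittleO.add ?_ <|
      (IsLittleO.sum (A := fun b q => |mertens q| + |mertens (q * K / b)|) fun b hb =>
        IsLittleO.add ?_ ?_).congr_left fun q => sum_apply q _ _
    · exact (isLittleO_one_left_iff ℝ).2 <| tendsto_norm_atTop_atTop.comp <|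
        tendsto_natCast_atTop_atTop.comp hqK
    · exact (isLittleO_comp_of_le hM tendsto_id fun q => Nat.le_mul_of_pos_right q hK).abs_left
    · obtain ⟨hb0, hbK⟩ := mem_Ioo.1 hb
      refine (isLittleO_comp_of_le hM (tendsto_atTop_mono (fun q => ?_) tendsto_id)
        fun q => Nat.div_le_self _ b).abs_left
      exact (Nat.le_div_iff_mul_le hb0).2 (Nat.mul_le_mul_left q hbK.le)
  · filter_upwards [eventually_gt_atTop 0] with q hq
    have h := abs_mul_sumMoebiusDiv_le hq hK
    have hqK : (0 : ℝ) < (q * K : ℕ) := by positivity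
    rw [abs_mul, abs_of_pos hqK] at h
    have hq1 : (q : ℝ) / (q * K : ℕ) = 1 / K := by
      push_cast
      field_simp
    calc |sumMoebiusDiv q| ≤ (q + S q) / (q * K : ℕ) := by
          rw [le_div_iff₀ hqK]
          linarith
      _ ≤ ε + S q / (q * K : ℕ) := by
          rw [add_div, hq1]
          linarith

theorem abs_sum_moebius_mul_log_div_le (N : ℕ) :
    |∑ n ∈ Ioc 0 N, (μ n : ℝ) * Real.log (N / n)| ≤ N := by
  refine (abs_sum_le_sum_abs _ _).trans ((sum_le_sum fun n hn => ?_).trans (sum_log_div_le N))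
  obtain ⟨hn0, hnN⟩ := mem_Ioc.1 hn
  have hlog : 0 ≤ Real.log (N / n) := Real.log_nonneg <| by
    rw [le_div_iff₀ (by positivity), one_mul]
    exact_mod_cast hnN
  rw [abs_mul, abs_of_nonneg hlog]
  exact mul_le_of_le_one_left hlog (abs_moebius_cast_le_one n)

theorem abs_sum_moebius_mul_psi_sub_le {ε C : ℝ} (hε : 0 ≤ ε)
    (hψ : ∀ y ≥ 0, |ψ y - y| ≤ ε * y + C) (N : ℕ) :
    |∑ a ∈ Ioc 0 N, (μ a : ℝ) * (ψ (N / a) - N / a)| ≤ ε * N * (1 + Real.log N) + C * N := by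
  calc |∑ a ∈ Ioc 0 N, (μ a : ℝ) * (ψ (N / a) - N / a)|
      ≤ ∑ a ∈ Ioc 0 N, (ε * N * (a : ℝ)⁻¹ + C) := by
        refine (abs_sum_le_sum_abs _ _).trans (sum_le_sum fun a _ => ?_)
        rw [abs_mul, mul_assoc, ← div_eq_mul_inv]
        exact (mul_le_of_le_one_left (abs_nonneg _) (abs_moebius_cast_le_one a)).trans
          (hψ _ (by positivity))
    _ = ε * N * ∑ a ∈ Ioc 0 N, (a : ℝ)⁻¹ + C * N := by
        rw [sum_add_distrib, mul_sum]
        simp [mul_comm]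
    _ ≤ ε * N * (1 + Real.log N) + C * N := by
        gcongr
        exact sum_Ioc_inv_le_one_add_log N

theorem abs_mertens_mul_log_le {ε C : ℝ} (hε : 0 ≤ ε) (hψ : ∀ y ≥ 0, |ψ y - y| ≤ ε * y + C)
    {N : ℕ} (hN : 0 < N) :
    |mertens N| * Real.log N ≤ ε * N * Real.log N + (3 + ε + C) * N := by
  have hsplit : mertens N * Real.log N = ∑ n ∈ Ioc 0 N, (μ n : ℝ) * Real.log (N / n) -
      (N * sumMoebiusDiv N + ∑ a ∈ Ioc 0 N, (μ a : ℝ) * (ψ (N / a) - N / a)) := by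
    have hψsum : (N : ℝ) * sumMoebiusDiv N + ∑ a ∈ Ioc 0 N, (μ a : ℝ) * (ψ (N / a) - N / a) =
        ∑ a ∈ Ioc 0 N, (μ a : ℝ) * ψ (N / a) := by
      rw [sumMoebiusDiv, mul_sum, ← sum_add_distrib]
      exact sum_congr rfl fun a _ => by ring
    rw [hψsum, ← neg_neg (∑ a ∈ Ioc 0 N, (μ a : ℝ) * ψ (N / a)),
      ← sum_moebius_mul_log_eq_neg_sum_psi, sub_neg_eq_add, ← sum_add_distrib, mertens, sum_mul]
    refine sum_congr rfl fun n hn => ?_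
    rw [Real.log_div (by positivity) (Nat.cast_ne_zero.2 (mem_Ioc.1 hn).1.ne')]
    ring
  have h1 := abs_sum_moebius_mul_log_div_le N
  have h2 : |(N : ℝ) * sumMoebiusDiv N| ≤ 1 + N := by
    have hIoo : Ioo 0 1 = (∅ : Finset ℕ) := rfl
    simpa [hIoo] using abs_mul_sumMoebiusDiv_le hN one_pos
  have h3 := abs_sum_moebius_mul_psi_sub_le hε hψ N
  have h4 := abs_sub (∑ n ∈ Ioc 0 N, (μ n : ℝ) * Real.log (N / n))
    ((N : ℝ) * sumMoebiusDiv N + ∑ a ∈ Ioc 0 N, (μ a : ℝ) * (ψ (N / a) - N / a))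
  have h5 := abs_add_le ((N : ℝ) * sumMoebiusDiv N)
    (∑ a ∈ Ioc 0 N, (μ a : ℝ) * (ψ (N / a) - N / a))
  have hN1 : (1 : ℝ) ≤ N := by exact_mod_cast hN
  calc |mertens N| * Real.log N = |mertens N * Real.log N| := by
        rw [abs_mul, abs_of_nonneg (Real.log_natCast_nonneg N)]
    _ ≤ ε * N * Real.log N + (3 + ε + C) * N := by
        rw [hsplit]
        linarith [show ε * N * (1 + Real.log N) = ε * N + ε * N * Real.log N by ring,
          show (3 + ε + C) * N = 3 * N + ε * N + C * N by ring]

theorem isLittleO_mertens (hψ : (fun x => ψ x - x) =o[atTop] id) :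
    (fun N => mertens N) =o[atTop] (fun N => (N : ℝ)) := by
  refine (isLittleO_iff_tendsto' (Eventually.of_forall fun N hN => ?_)).2 ?_
  · simp [mertens, Nat.cast_eq_zero.1 hN]
  refine tendsto_zero_of_forall_abs_le_add fun ε hε => ?_
  obtain ⟨C, hC⟩ := exists_abs_psi_sub_le hψ hε
  refine ⟨fun N => (3 + ε + C) / Real.log N, ?_, ?_⟩
  · exact tendsto_const_nhds.div_atTop (Real.tendsto_log_atTop.comp tendsto_natCast_atTop_atTop)
  · filter_upwards [eventually_ge_atTop 2] with N hN
    have hN0 : (0 : ℝ) < N := by positivity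
    have hlog : 0 < Real.log N := Real.log_pos (by exact_mod_cast hN)
    rw [abs_div, Nat.abs_cast, div_le_iff₀ hN0]
    refine le_of_mul_le_mul_right ?_ hlog
    calc |mertens N| * Real.log N ≤ ε * N * Real.log N + (3 + ε + C) * N :=
          abs_mertens_mul_log_le hε.le hC (by omega)
      _ = (ε + (3 + ε + C) / Real.log N) * N * Real.log N := by
          field_simp

theorem sumMoebiusLogDiv_eq (N : ℕ) :
    sumMoebiusLogDiv N = sumMoebiusDiv N * Real.log N -
      ∑ n ∈ range N, sumMoebiusDiv n * (Real.log (n + 1) - Real.log n) := by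
  induction N with
  | zero => simp [sumMoebiusLogDiv, sumMoebiusDiv]
  | succ N ih =>
    have hm : sumMoebiusDiv (N + 1) = sumMoebiusDiv N + (μ (N + 1) : ℝ) / (N + 1 : ℕ) :=
      sum_Ioc_succ_top (Nat.zero_le N) _
    have hH : sumMoebiusLogDiv (N + 1) =
        sumMoebiusLogDiv N + (μ (N + 1) : ℝ) * Real.log (N + 1 : ℕ) / (N + 1 : ℕ) :=
      sum_Ioc_succ_top (Nat.zero_le N) _
    rw [hH, hm, ih, sum_range_succ]
    push_cast
    ring

theorem isLittleO_sumMoebiusLogDiv (hm : Tendsto sumMoebiusDiv atTop (𝓝 0)) :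
    sumMoebiusLogDiv =o[atTop] (fun N => Real.log N) := by
  set w : ℕ → ℝ := fun n => Real.log (n + 1) - Real.log n
  have hw : 0 ≤ w := fun n => by
    rcases n.eq_zero_or_pos with rfl | hn
    · simp [w]
    · exact sub_nonneg.2 (Real.log_le_log (by positivity) (by linarith))
  have hsum : ∀ N : ℕ, ∑ n ∈ range N, w n = Real.log N := fun N => by
    simpa [w, sum_sub_distrib] using sum_range_sub (fun n : ℕ => Real.log n) N
  have hm' : sumMoebiusDiv =o[atTop] (fun _ => (1 : ℝ)) := (isLittleO_one_iff ℝ).2 hm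
  have h1 : (fun N => sumMoebiusDiv N * Real.log N) =o[atTop] (fun N => Real.log N) := by
    simpa using hm'.mul_isBigO (isBigO_refl (fun N : ℕ => Real.log N) atTop)
  have h2 : (fun N => ∑ n ∈ range N, sumMoebiusDiv n * w n) =o[atTop]
      (fun N => Real.log N) := by
    have hmw : (fun n => sumMoebiusDiv n * w n) =o[atTop] w := by
      simpa using hm'.mul_isBigO (isBigO_refl w atTop)
    simpa [hsum] using hmw.sum_range hw <|
      (Real.tendsto_log_atTop.comp tendsto_natCast_atTop_atTop).congr fun N => (hsum N).symm
  exact (h1.sub h2).congr_left fun N => (sumMoebiusLogDiv_eq N).symm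

theorem moebius_log_div_log_tendsto_zero
    (hθ : Tendsto (fun x : ℝ => theta x / x) atTop (nhds 1)) :
    Tendsto (fun x : ℝ =>
        (1 / Real.log x) *
          ∑ k ∈ Finset.Icc 1 ⌊x⌋₊, (ArithmeticFunction.moebius k : ℝ) * Real.log k / k)
      atTop (nhds 0) := by
  have hH := isLittleO_sumMoebiusLogDiv <| tendsto_sumMoebiusDiv <| isLittleO_mertens <|
    isLittleO_psi_sub_self hθ
  have hfloor : (fun x : ℝ => Real.log ⌊x⌋₊) =O[atTop] Real.log := by
    refine IsBigO.of_bound 1 ?_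
    filter_upwards [eventually_ge_atTop 1] with x hx
    have hfl : (1 : ℝ) ≤ ⌊x⌋₊ := by exact_mod_cast (Nat.one_le_floor_iff x).2 hx
    rw [Real.norm_of_nonneg (Real.log_nonneg hfl), Real.norm_of_nonneg (Real.log_nonneg hx),
      one_mul]
    exact Real.log_le_log (by linarith) (Nat.floor_le (by linarith))
  refine ((hH.comp_tendsto tendsto_nat_floor_atTop).trans_isBigO hfloor).tendsto_div_nhds_zero.congr
    fun x => ?_
  rw [one_div_mul_eq_div]
  rfl
end
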